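/- Let G be a finite group and k a commutative ring. The crossed Burnside algebra xB_k(G) — the free k-module on G-conjugacy classes of pairs (H, a) with H ≤ G a subgroup and a ∈ C_G(H) an element of its centralizer, with multiplication on basis elements given by (K, b)·(H, a) = Σ_{[g] ∈ K\G/H} (K ∩ gHg⁻¹, b·gag⁻¹) — is a well-defined associative, commutative, unital k-algebra with unit the class of (G, e). -/

import Mathlib

/-!
A crossed `G`-set is a finite `G`-set `X` with a map `w : X → G` such that
`w (g • x) = g * w x * g⁻¹`; then `w x` centralizes the stabilizer of `x`, so summing the
classes of the pairs `(stab x, w x)` over the orbits gives an element `[X, w]` of `XB k G`.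
The basis element `(H, a)` is `[G ⧸ H, gH ↦ g a g⁻¹]`, and the orbits of `G ⧸ K × G ⧸ H`
are the `G`-orbits of the points `(K, gH)` for `g` running over `K\G/H`, with stabilizer
`K ∩ gHg⁻¹`. Hence the defining formula says exactly that `(K, b) · (H, a)` is the class of
the product crossed set, with weight `(x, y) ↦ w x * v y`.

Every law now comes from an isomorphism of crossed sets. Conjugate pairs give isomorphic
coset crossed sets, so the formula is independent of all choices; `(X × Y) × Z ≅ X × (Y × Z)`
and `G ⧸ G × Y ≅ Y` preserve weights; and `X × Y ≅ Y × X` changes the weight `w x * v y` into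
its conjugate `v y * w x` by `v y`, which centralizes the stabilizer of `(x, y)`.
-/

namespace CrossedBurnside

variable {G : Type} [Group G]

/-- Pairs `(H, a)` with `H ≤ G` and `a ∈ C_G(H)`. -/
def CPair (G : Type) [Group G] : Type :=
  {p : Subgroup G × G // p.2 ∈ Subgroup.centralizer (p.1 : Set G)}

/-- Simultaneous conjugation relation on pairs: `(H,a) ~ (xHx⁻¹, xax⁻¹)`. -/
def conjRel (p q : CPair G) : Prop :=
  ∃ x : G, Subgroup.map (MulAut.conj x).toMonoidHom p.1.1 = q.1.1 ∧
    x * p.1.2 * x⁻¹ = q.1.2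

/-- The underlying `k`-module of the crossed Burnside algebra: the free `k`-module
on `G`-conjugacy classes of pairs `(H, a)` with `a ∈ C_G(H)`. -/
abbrev XB (k G : Type) [CommRing k] [Group G] : Type :=
  Quot (conjRel (G := G)) →₀ k

theorem centralizer_aux {K H : Subgroup G} {b a g : G}
    (hb : b ∈ Subgroup.centralizer (K : Set G))
    (ha : a ∈ Subgroup.centralizer (H : Set G)) :
    b * (g * a * g⁻¹) ∈
      Subgroup.centralizer
        ((K ⊓ Subgroup.map (MulAut.conj g).toMonoidHom H : Subgroup G) : Set G) := by
  intro u hu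
  obtain ⟨huK, huH⟩ := hu
  obtain ⟨h, hh, he⟩ := huH
  have h1 : u * b = b * u := hb u huK
  have h2 : h * a = a * h := ha h hh
  have hu' : u = g * h * g⁻¹ := by simpa [MulAut.conj] using he.symm
  have h3 : u * (g * a * g⁻¹) = (g * a * g⁻¹) * u := by
    rw [hu']
    calc g * h * g⁻¹ * (g * a * g⁻¹) = g * (h * a) * g⁻¹ := by group
    _ = g * (a * h) * g⁻¹ := by rw [h2]
    _ = g * a * g⁻¹ * (g * h * g⁻¹) := by group
  rw [← mul_assoc, h1, mul_assoc, h3, ← mul_assoc]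

theorem one_mem_centralizer_top :
    (1 : G) ∈ Subgroup.centralizer ((⊤ : Subgroup G) : Set G) := by
  intro u _; simp


variable {k : Type} [CommRing k]

/-- The basis element of `XB k G` given by a pair `(H, a)` with `a ∈ C_G(H)`. -/
noncomputable def basisElt (k : Type) [CommRing k] (H : Subgroup G) (a : G)
    (ha : a ∈ Subgroup.centralizer (H : Set G)) : XB k G :=
  Finsupp.single (Quot.mk (conjRel (G := G)) ⟨(H, a), ha⟩) 1

/-- `mul` realizes the crossed Burnside multiplication: for all pairs `(K, b)`,
`(H, a)` and every set `R` of representatives of the double cosets `K\G/H`,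
`(K, b) · (H, a) = Σ_{g ∈ R} (K ∩ gHg⁻¹, b·gag⁻¹)`. -/
def IsXBMul (mul : XB k G →ₗ[k] XB k G →ₗ[k] XB k G) : Prop :=
  ∀ (K H : Subgroup G) (b a : G)
    (hb : b ∈ Subgroup.centralizer (K : Set G))
    (ha : a ∈ Subgroup.centralizer (H : Set G))
    (R : Finset G),
    (∀ x : G, ∃! r, r ∈ R ∧ x ∈ DoubleCoset.doubleCoset r (K : Set G) (H : Set G)) →
    mul (basisElt k K b hb) (basisElt k H a ha) =
      ∑ g ∈ R,
        basisElt k (K ⊓ Subgroup.map (MulAut.conj g).toMonoidHom H)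
          (b * (g * a * g⁻¹)) (centralizer_aux hb ha)

open MulAction
open DoubleCoset (doubleCoset mem_doubleCoset)

theorem basisElt_eq_of_conj {S S' : Subgroup G} {a a' : G}
    (ha : a ∈ Subgroup.centralizer (S : Set G)) (ha' : a' ∈ Subgroup.centralizer (S' : Set G))
    (x : G) (hS : S.map (MulAut.conj x).toMonoidHom = S') (hx : x * a * x⁻¹ = a') :
    basisElt k S a ha = basisElt k S' a' ha' :=
  congrArg (Finsupp.single · 1) (Quot.sound ⟨x, hS, hx⟩)

theorem basisElt_congr {S S' : Subgroup G} {a a' : G} (hS : S = S') (ha : a = a')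
    (h : a ∈ Subgroup.centralizer (S : Set G)) (h' : a' ∈ Subgroup.centralizer (S' : Set G)) :
    basisElt k S a h = basisElt k S' a' h' := by
  subst hS ha
  rfl

theorem map_conj_eq_self_of_mem_centralizer {S : Subgroup G} {t : G}
    (ht : t ∈ Subgroup.centralizer (S : Set G)) :
    S.map (MulAut.conj t).toMonoidHom = S :=
  Subgroup.mem_normalizer_iff_map_conj_eq.mp (Subgroup.centralizer_le_normalizer _ ht)

section CrossedSet

variable {X Y : Type} [MulAction G X] [MulAction G Y]

def IsCrossing (w : X → G) : Prop :=
  ∀ (g : G) (x : X), w (g • x) = g * w x * g⁻¹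

theorem IsCrossing.mem_centralizer_stabilizer {w : X → G} (hw : IsCrossing w) (x : X) :
    w x ∈ Subgroup.centralizer (stabilizer G x : Set G) := by
  intro u hu
  have hfix : w x = u * w x * u⁻¹ := by rw [← hw, mem_stabilizer_iff.mp hu]
  calc u * w x = u * w x * u⁻¹ * u := by group
    _ = w x * u := by rw [← hfix]

theorem IsCrossing.prod {w : X → G} {v : Y → G} (hw : IsCrossing w) (hv : IsCrossing v) :
    IsCrossing fun p : X × Y => w p.1 * v p.2 := by
  rintro g ⟨x, y⟩
  simp only [Prod.smul_fst, Prod.smul_snd, hw g x, hv g y]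
  group

theorem stabilizer_prod (x : X) (y : Y) :
    stabilizer G (x, y) = stabilizer G x ⊓ stabilizer G y := by
  ext g
  simp [Prod.ext_iff]

theorem stabilizer_eq_of_equivariant (e : X ≃ Y)
    (he : ∀ (g : G) (x : X), e (g • x) = g • e x) (x : X) :
    stabilizer G (e x) = stabilizer G x := by
  ext g
  rw [mem_stabilizer_iff, mem_stabilizer_iff, ← he, e.apply_eq_iff_eq]

variable (k) in
noncomputable def basisEltAt {w : X → G} (hw : IsCrossing w) (x : X) : XB k G :=
  basisElt k (stabilizer G x) (w x) (hw.mem_centralizer_stabilizer x)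

theorem basisEltAt_smul {w : X → G} (hw : IsCrossing w) (g : G) (x : X) :
    basisEltAt k hw (g • x) = basisEltAt k hw x :=
  (basisElt_eq_of_conj _ _ g (stabilizer_smul_eq_stabilizer_map_conj g x).symm
    (hw g x).symm).symm

theorem basisEltAt_of_mem_orbit {w : X → G} (hw : IsCrossing w) {x y : X}
    (h : y ∈ orbit G x) : basisEltAt k hw y = basisEltAt k hw x := by
  obtain ⟨g, rfl⟩ := h
  exact basisEltAt_smul hw g x

theorem basisEltAt_eq_of_conj {w : X → G} {v : Y → G} (hw : IsCrossing w) (hv : IsCrossing v)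
    {x : X} {y : Y} (hxy : stabilizer G y = stabilizer G x) (t : G)
    (ht : t ∈ Subgroup.centralizer (stabilizer G x : Set G)) (hwv : v y = t * w x * t⁻¹) :
    basisEltAt k hv y = basisEltAt k hw x :=
  (basisElt_eq_of_conj _ _ t ((map_conj_eq_self_of_mem_centralizer ht).trans hxy.symm)
    hwv.symm).symm

noncomputable instance [Finite X] : Fintype (orbitRel.Quotient G X) := Fintype.ofFinite _

variable (k) in
noncomputable def crossedSetClass [Finite X] {w : X → G} (hw : IsCrossing w) : XB k G :=
  ∑ o : orbitRel.Quotient G X, basisEltAt k hw o.out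

theorem mem_orbit_out_iff {x : X} {o : orbitRel.Quotient G X} :
    x ∈ orbit G o.out ↔ ⟦x⟧ = o := by
  rw [← orbitRel.Quotient.mem_orbit, orbitRel.Quotient.orbit_eq_orbit_out o Quotient.out_eq']

theorem crossedSetClass_eq_sum [Finite X] {w : X → G} (hw : IsCrossing w) {ι : Type}
    (s : Finset ι) (f : ι → X) (hf : ∀ x : X, ∃! i, i ∈ s ∧ x ∈ orbit G (f i)) :
    crossedSetClass k hw = ∑ i ∈ s, basisEltAt k hw (f i) := by
  refine (Finset.sum_nbij (fun i => ⟦f i⟧) (fun _ _ => Finset.mem_univ _) ?_ ?_ ?_).symm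
  · intro i hi j hj hij
    obtain ⟨_, _, huniq⟩ := hf (f i)
    exact (huniq i ⟨hi, mem_orbit_self _⟩).trans
      (huniq j ⟨hj, orbitRel_apply.mp (Quotient.exact hij)⟩).symm
  · intro o _
    obtain ⟨i, ⟨hi, hoi⟩, _⟩ := hf o.out
    refine ⟨i, hi, ?_⟩
    rw [← mem_orbit_out_iff]
    exact mem_orbit_symm.mp hoi
  · intro i _
    exact basisEltAt_of_mem_orbit hw (mem_orbit_out_iff.mpr rfl)

theorem crossedSetClass_congr [Finite X] [Finite Y] {w : X → G} {v : Y → G}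
    (hw : IsCrossing w) (hv : IsCrossing v) (e : X ≃ Y)
    (he : ∀ (g : G) (x : X), e (g • x) = g • e x)
    (hwv : ∀ x : X, ∃ t ∈ Subgroup.centralizer (stabilizer G x : Set G),
      v (e x) = t * w x * t⁻¹) :
    crossedSetClass k hw = crossedSetClass k hv := by
  have horbit : ∀ x x' : X, e x ∈ orbit G (e x') ↔ x ∈ orbit G x' := fun x x' => by
    simp only [mem_orbit_iff, ← he, e.apply_eq_iff_eq]
  rw [crossedSetClass_eq_sum (k := k) hv Finset.univ (fun o : orbitRel.Quotient G X => e o.out)]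
  · refine Finset.sum_congr rfl fun o _ => ?_
    obtain ⟨t, ht, hvt⟩ := hwv o.out
    exact (basisEltAt_eq_of_conj hw hv (stabilizer_eq_of_equivariant e he _) t ht hvt).symm
  · intro y
    obtain ⟨x, rfl⟩ := e.surjective y
    simp only [Finset.mem_univ, true_and, horbit, mem_orbit_out_iff]
    exact existsUnique_eq'

theorem crossedSetClass_congr_of_eq [Finite X] [Finite Y] {w : X → G} {v : Y → G}
    (hw : IsCrossing w) (hv : IsCrossing v) (e : X ≃ Y)
    (he : ∀ (g : G) (x : X), e (g • x) = g • e x) (hwv : ∀ x : X, v (e x) = w x) :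
    crossedSetClass k hw = crossedSetClass k hv :=
  crossedSetClass_congr hw hv e he fun x => ⟨1, Subgroup.one_mem _, by simp [hwv]⟩

end CrossedSet

section Cosets

def cosetCrossing (K : Subgroup G) (c : G) (hc : c ∈ Subgroup.centralizer (K : Set G)) :
    G ⧸ K → G :=
  fun q => q.liftOn' (fun g => g * c * g⁻¹) fun g g' h => by
    have hcomm : g⁻¹ * g' * c = c * (g⁻¹ * g') := hc _ (QuotientGroup.leftRel_apply.mp h)
    calc g * c * g⁻¹ = g * (c * (g⁻¹ * g')) * g'⁻¹ := by group
      _ = g' * c * g'⁻¹ := by rw [← hcomm]; group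

theorem cosetCrossing_coe (K : Subgroup G) (c : G) (hc : c ∈ Subgroup.centralizer (K : Set G))
    (g : G) : cosetCrossing K c hc g = g * c * g⁻¹ :=
  rfl

theorem isCrossing_cosetCrossing (K : Subgroup G) (c : G)
    (hc : c ∈ Subgroup.centralizer (K : Set G)) : IsCrossing (cosetCrossing K c hc) := by
  intro g q
  induction q using QuotientGroup.induction_on with
  | H a =>
    rw [MulAction.Quotient.smul_coe, cosetCrossing_coe, cosetCrossing_coe, smul_eq_mul]
    group

theorem stabilizer_quotient_coe (K : Subgroup G) (g : G) :
    stabilizer G (g : G ⧸ K) = K.map (MulAut.conj g).toMonoidHom := by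
  rw [← mul_one g, ← smul_eq_mul, ← MulAction.Quotient.smul_coe,
    stabilizer_smul_eq_stabilizer_map_conj, MulAction.stabilizer_quotient, smul_eq_mul, mul_one]

theorem crossedSetClass_cosetCrossing [Finite G] (K : Subgroup G) (c : G)
    (hc : c ∈ Subgroup.centralizer (K : Set G)) :
    crossedSetClass k (isCrossing_cosetCrossing K c hc) = basisElt k K c hc := by
  rw [crossedSetClass_eq_sum (k := k) _ {()} fun _ => ((1 : G) : G ⧸ K)]
  · refine (Finset.sum_singleton _ _).trans (basisElt_congr ?_ ?_ _ _)
    · exact MulAction.stabilizer_quotient K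
    · rw [cosetCrossing_coe]; group
  · intro q
    induction q using QuotientGroup.induction_on with
    | H g => exact ⟨(), ⟨Finset.mem_singleton_self _, g, by simp⟩, fun _ _ => rfl⟩

def cosetConjEquiv (K : Subgroup G) (x : G) : G ⧸ K ≃ G ⧸ K.map (MulAut.conj x).toMonoidHom :=
  Quotient.congr (Equiv.mulRight x⁻¹) fun g g' => by
    simp only [QuotientGroup.leftRel_apply, Subgroup.mem_map_equiv, Equiv.coe_mulRight,
      MulAut.conj_symm_apply]
    group

theorem cosetConjEquiv_coe (K : Subgroup G) (x g : G) :
    cosetConjEquiv K x g = ((g * x⁻¹ : G) : G ⧸ K.map (MulAut.conj x).toMonoidHom) :=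
  rfl

theorem cosetConjEquiv_smul (K : Subgroup G) (x g : G) (q : G ⧸ K) :
    cosetConjEquiv K x (g • q) = g • cosetConjEquiv K x q := by
  induction q using QuotientGroup.induction_on with
  | H a =>
    simp only [MulAction.Quotient.smul_coe, cosetConjEquiv_coe, smul_eq_mul, mul_assoc]

theorem cosetCrossing_cosetConjEquiv (K : Subgroup G) (x c : G)
    (hc : c ∈ Subgroup.centralizer (K : Set G))
    (hc' : x * c * x⁻¹ ∈ Subgroup.centralizer (K.map (MulAut.conj x).toMonoidHom : Set G))
    (q : G ⧸ K) :
    cosetCrossing _ (x * c * x⁻¹) hc' (cosetConjEquiv K x q) = cosetCrossing K c hc q := by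
  induction q using QuotientGroup.induction_on with
  | H a =>
    rw [cosetConjEquiv_coe, cosetCrossing_coe, cosetCrossing_coe]
    group

end Cosets

section ProductWithCoset

variable {X : Type} [MulAction G X]

theorem exists_finset_doubleCoset_reps [Finite G] (A B : Subgroup G) :
    ∃ R : Finset G, ∀ x : G, ∃! r, r ∈ R ∧ x ∈ doubleCoset r (A : Set G) B := by
  have hmem : ∀ r x : G, x ∈ doubleCoset r (A : Set G) B ↔
      DoubleCoset.mk A B r = DoubleCoset.mk A B x := fun r x =>
    mem_doubleCoset.trans (DoubleCoset.eq A B r x).symm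
  refine ⟨(Set.toFinite {r : G | (DoubleCoset.mk A B r).out = r}).toFinset, fun x => ?_⟩
  refine ⟨(DoubleCoset.mk A B x).out, ⟨?_, ?_⟩, ?_⟩
  · rw [Set.Finite.mem_toFinset, Set.mem_ofPred_eq, DoubleCoset.out_eq']
  · rw [hmem, DoubleCoset.out_eq']
  · rintro r ⟨hr, hx⟩
    rw [Set.Finite.mem_toFinset, Set.mem_ofPred_eq] at hr
    rw [← hr, (hmem r x).mp hx]

theorem mem_orbit_prod_coset_iff (L : Subgroup G) (x : X) (u z g : G) :
    (u • x, (z : G ⧸ L)) ∈ orbit G (x, (g : G ⧸ L)) ↔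
      u⁻¹ * z ∈ doubleCoset g (stabilizer G x : Set G) L := by
  simp only [mem_orbit_iff, Prod.smul_mk, Prod.mk.injEq, MulAction.Quotient.smul_coe, smul_eq_mul,
    QuotientGroup.eq, mem_doubleCoset]
  constructor
  · rintro ⟨v, hvx, hvz⟩
    refine ⟨u⁻¹ * v, ?_, (v * g)⁻¹ * z, hvz, by group⟩
    rw [SetLike.mem_coe, mem_stabilizer_iff, mul_smul, hvx, inv_smul_smul]
  · rintro ⟨s, hs, l, hl, he⟩
    refine ⟨u * s, by rw [mul_smul, mem_stabilizer_iff.mp hs], ?_⟩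
    have hl' : (u * s * g)⁻¹ * z = l := by
      rw [show (u * s * g)⁻¹ * z = (s * g)⁻¹ * (u⁻¹ * z) by group, he]
      group
    rwa [hl']

theorem existsUnique_orbit_prod_coset [Finite X] (L : Subgroup G)
    (R : orbitRel.Quotient G X → Finset G)
    (hR : ∀ o x, ∃! r, r ∈ R o ∧ x ∈ doubleCoset r (stabilizer G o.out : Set G) L)
    (p : X × G ⧸ L) :
    ∃! i : (Σ _ : orbitRel.Quotient G X, G),
      i ∈ Finset.univ.sigma R ∧ p ∈ orbit G (i.1.out, (i.2 : G ⧸ L)) := by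
  obtain ⟨x, q⟩ := p
  obtain ⟨z, rfl⟩ := QuotientGroup.mk_surjective q
  obtain ⟨u, hu⟩ :=
    mem_orbit_iff.mp (mem_orbit_out_iff.mpr (rfl : (⟦x⟧ : orbitRel.Quotient G X) = ⟦x⟧))
  generalize hx : (⟦x⟧ : orbitRel.Quotient G X) = o₀ at hu
  subst hu
  have hmem : ∀ (o : orbitRel.Quotient G X) (g : G),
      (u • o₀.out, (z : G ⧸ L)) ∈ orbit G (o.out, (g : G ⧸ L)) ↔
        o = o₀ ∧ u⁻¹ * z ∈ doubleCoset g (stabilizer G o₀.out : Set G) L := by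
    intro o g
    constructor
    · intro h
      obtain ⟨v, hv⟩ := mem_orbit_iff.mp h
      obtain rfl : o = o₀ := (mem_orbit_out_iff.mp ⟨v, congrArg Prod.fst hv⟩).symm.trans hx
      exact ⟨rfl, (mem_orbit_prod_coset_iff L _ u z g).mp h⟩
    · rintro ⟨rfl, h⟩
      exact (mem_orbit_prod_coset_iff L _ u z g).mpr h
  obtain ⟨r, ⟨hr, hd⟩, huniq⟩ := hR o₀ (u⁻¹ * z)
  refine ⟨⟨o₀, r⟩,
    ⟨Finset.mem_sigma.mpr ⟨Finset.mem_univ _, hr⟩, (hmem _ r).mpr ⟨rfl, hd⟩⟩, ?_⟩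
  rintro ⟨o, g⟩ ⟨hi, hp⟩
  obtain ⟨rfl, hd'⟩ := (hmem o g).mp hp
  rw [huniq g ⟨(Finset.mem_sigma.mp hi).2, hd'⟩]

theorem crossedSetClass_prod_coset_eq_sum [Finite G] [Finite X] {w : X → G} (hw : IsCrossing w)
    (L : Subgroup G) (c : G) (hc : c ∈ Subgroup.centralizer (L : Set G)) {ι : Type}
    (s : Finset ι) (x : ι → X) (g : ι → G)
    (hrep : ∀ p : X × G ⧸ L, ∃! i, i ∈ s ∧ p ∈ orbit G (x i, (g i : G ⧸ L))) :
    crossedSetClass k (hw.prod (isCrossing_cosetCrossing L c hc)) =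
      ∑ i ∈ s, basisElt k (stabilizer G (x i) ⊓ L.map (MulAut.conj (g i)).toMonoidHom)
        (w (x i) * (g i * c * (g i)⁻¹))
        (centralizer_aux (hw.mem_centralizer_stabilizer (x i)) hc) := by
  rw [crossedSetClass_eq_sum (k := k) _ s (fun i => (x i, (g i : G ⧸ L))) hrep]
  refine Finset.sum_congr rfl fun i _ => basisElt_congr ?_ rfl _ _
  rw [stabilizer_prod, stabilizer_quotient_coe]

end ProductWithCoset

section Multiplication

variable (k)

noncomputable def cosetProdClass [Finite G] (K H : Subgroup G) (b a : G)
    (hb : b ∈ Subgroup.centralizer (K : Set G)) (ha : a ∈ Subgroup.centralizer (H : Set G)) :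
    XB k G :=
  crossedSetClass k ((isCrossing_cosetCrossing K b hb).prod (isCrossing_cosetCrossing H a ha))

theorem cosetProdClass_eq_sum [Finite G] (K H : Subgroup G) (b a : G)
    (hb : b ∈ Subgroup.centralizer (K : Set G)) (ha : a ∈ Subgroup.centralizer (H : Set G))
    (R : Finset G)
    (hR : ∀ x : G, ∃! r, r ∈ R ∧ x ∈ doubleCoset r (K : Set G) (H : Set G)) :
    cosetProdClass k K H b a hb ha =
      ∑ g ∈ R, basisElt k (K ⊓ H.map (MulAut.conj g).toMonoidHom) (b * (g * a * g⁻¹))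
        (centralizer_aux hb ha) := by
  rw [cosetProdClass, crossedSetClass_prod_coset_eq_sum (isCrossing_cosetCrossing K b hb) H a ha R
    (fun _ => ((1 : G) : G ⧸ K)) (fun g => g)]
  · refine Finset.sum_congr rfl fun g _ => basisElt_congr ?_ ?_ _ _
    · rw [MulAction.stabilizer_quotient]
    · rw [cosetCrossing_coe]; group
  · rintro ⟨q₁, q₂⟩
    obtain ⟨y, rfl⟩ := QuotientGroup.mk_surjective q₁
    obtain ⟨z, rfl⟩ := QuotientGroup.mk_surjective q₂
    have hmem := mem_orbit_prod_coset_iff H ((1 : G) : G ⧸ K) y z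
    rw [MulAction.Quotient.smul_coe, smul_eq_mul, mul_one, MulAction.stabilizer_quotient] at hmem
    simpa only [hmem] using hR (y⁻¹ * z)

theorem cosetProdClass_congr [Finite G] {p p' q q' : CPair G} (hp : conjRel p p')
    (hq : conjRel q q') :
    cosetProdClass k p.1.1 q.1.1 p.1.2 q.1.2 p.2 q.2 =
      cosetProdClass k p'.1.1 q'.1.1 p'.1.2 q'.1.2 p'.2 q'.2 := by
  obtain ⟨⟨K, b⟩, hb⟩ := p
  obtain ⟨⟨H, a⟩, ha⟩ := q
  obtain ⟨⟨K', b'⟩, _⟩ := p'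
  obtain ⟨⟨H', a'⟩, _⟩ := q'
  obtain ⟨x, rfl, rfl⟩ := hp
  obtain ⟨y, rfl, rfl⟩ := hq
  let e := Equiv.prodCongr (cosetConjEquiv K x) (cosetConjEquiv H y)
  refine crossedSetClass_congr_of_eq _ _ e ?_ ?_
  · rintro g ⟨q₁, q₂⟩
    simp only [e, Equiv.prodCongr_apply, Prod.smul_mk, Prod.map, cosetConjEquiv_smul]
  · rintro ⟨q₁, q₂⟩
    exact congrArg₂ (· * ·) (cosetCrossing_cosetConjEquiv K x b hb _ q₁)
      (cosetCrossing_cosetConjEquiv H y a ha _ q₂)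

theorem conjRel_refl (p : CPair G) : conjRel p p :=
  ⟨1, by ext; simp, by group⟩

noncomputable def mulBasis [Finite G] :
    Quot (conjRel (G := G)) → Quot (conjRel (G := G)) → XB k G :=
  Quot.lift₂ (fun p q => cosetProdClass k p.1.1 q.1.1 p.1.2 q.1.2 p.2 q.2)
    (fun p _ _ h => cosetProdClass_congr k (conjRel_refl p) h)
    (fun _ _ q h => cosetProdClass_congr k h (conjRel_refl q))

noncomputable def xbMul [Finite G] : XB k G →ₗ[k] XB k G →ₗ[k] XB k G :=
  Finsupp.linearCombination k fun p => Finsupp.linearCombination k (mulBasis k p)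

theorem isXBMul_xbMul [Finite G] : IsXBMul (xbMul k (G := G)) := by
  intro K H b a hb ha R hR
  simp only [xbMul, basisElt, Finsupp.linearCombination_single, one_smul]
  exact cosetProdClass_eq_sum k K H b a hb ha R hR

end Multiplication

section ProductLaws

variable {X Y Z : Type} [MulAction G X] [MulAction G Y] [MulAction G Z]
  [Finite X] [Finite Y] [Finite Z] {u : X → G} {v : Y → G} {w : Z → G}

theorem crossedSetClass_prod_comm (hv : IsCrossing v) (hw : IsCrossing w) :
    crossedSetClass k (hv.prod hw) = crossedSetClass k (hw.prod hv) := by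
  refine crossedSetClass_congr _ _ (Equiv.prodComm Y Z) (fun _ _ => rfl) ?_
  rintro ⟨y, z⟩
  refine ⟨w z, Subgroup.centralizer_le ?_ (hw.mem_centralizer_stabilizer z), ?_⟩
  · rw [stabilizer_prod]
    exact inf_le_right
  · show w z * v y = w z * (v y * w z) * (w z)⁻¹
    group

theorem crossedSetClass_prod_assoc (hu : IsCrossing u) (hv : IsCrossing v) (hw : IsCrossing w) :
    crossedSetClass k ((hu.prod hv).prod hw) = crossedSetClass k (hu.prod (hv.prod hw)) :=
  crossedSetClass_congr_of_eq _ _ (Equiv.prodAssoc X Y Z) (fun _ _ => rfl) fun _ =>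
    (mul_assoc _ _ _).symm

end ProductLaws

section Laws

theorem XB.hom_ext {M : Type*} [AddCommMonoid M] [Module k M] {f g : XB k G →ₗ[k] M}
    (h : ∀ (H : Subgroup G) (a : G) (ha : a ∈ Subgroup.centralizer (H : Set G)),
      f (basisElt k H a ha) = g (basisElt k H a ha)) : f = g :=
  Finsupp.lhom_ext' fun p => LinearMap.ext_ring <|
    Quot.ind (β := fun p => f (Finsupp.single p 1) = g (Finsupp.single p 1))
      (fun q => h q.1.1 q.1.2 q.2) p

variable [Finite G]

theorem cosetProdClass_comm (K H : Subgroup G) (b a : G)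
    (hb : b ∈ Subgroup.centralizer (K : Set G)) (ha : a ∈ Subgroup.centralizer (H : Set G)) :
    cosetProdClass k K H b a hb ha = cosetProdClass k H K a b ha hb :=
  crossedSetClass_prod_comm (isCrossing_cosetCrossing K b hb) (isCrossing_cosetCrossing H a ha)

theorem cosetProdClass_top_one (H : Subgroup G) (a : G)
    (ha : a ∈ Subgroup.centralizer (H : Set G)) :
    cosetProdClass k ⊤ H 1 a one_mem_centralizer_top ha = basisElt k H a ha := by
  have : Subsingleton (G ⧸ (⊤ : Subgroup G)) := QuotientGroup.subsingleton_quotient_top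
  have : Unique (G ⧸ (⊤ : Subgroup G)) := Unique.mk' _
  rw [cosetProdClass, ← crossedSetClass_cosetCrossing (k := k) H a ha]
  refine crossedSetClass_congr_of_eq _ _ (Equiv.uniqueProd _ _) (fun _ _ => rfl) ?_
  rintro ⟨q, r⟩
  induction q using QuotientGroup.induction_on with
  | H g => simp [cosetCrossing_coe]

variable {mul : XB k G →ₗ[k] XB k G →ₗ[k] XB k G}

theorem IsXBMul.mul_basisElt (hmul : IsXBMul mul) (K H : Subgroup G) (b a : G)
    (hb : b ∈ Subgroup.centralizer (K : Set G)) (ha : a ∈ Subgroup.centralizer (H : Set G)) :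
    mul (basisElt k K b hb) (basisElt k H a ha) = cosetProdClass k K H b a hb ha := by
  obtain ⟨R, hR⟩ := exists_finset_doubleCoset_reps K H
  rw [hmul K H b a hb ha R hR, cosetProdClass_eq_sum k K H b a hb ha R hR]

theorem IsXBMul.mul_crossedSetClass (hmul : IsXBMul mul) {X : Type} [MulAction G X] [Finite X]
    {w : X → G} (hw : IsCrossing w) (L : Subgroup G) (c : G)
    (hc : c ∈ Subgroup.centralizer (L : Set G)) :
    mul (crossedSetClass k hw) (basisElt k L c hc) =
      crossedSetClass k (hw.prod (isCrossing_cosetCrossing L c hc)) := by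
  choose R hR using fun o : orbitRel.Quotient G X =>
    exists_finset_doubleCoset_reps (stabilizer G o.out) L
  rw [crossedSetClass_prod_coset_eq_sum hw L c hc (Finset.univ.sigma R) (fun i => i.1.out)
    (fun i => i.2) (existsUnique_orbit_prod_coset L R hR), Finset.sum_sigma, crossedSetClass,
    map_sum, LinearMap.sum_apply]
  exact Finset.sum_congr rfl fun o _ => hmul _ _ _ _ _ _ (R o) (hR o)

theorem IsXBMul.comm (hmul : IsXBMul mul) (x y : XB k G) : mul x y = mul y x := by
  have hflip : mul = mul.flip := XB.hom_ext fun K b hb => XB.hom_ext fun H a ha => by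
    rw [LinearMap.flip_apply, hmul.mul_basisElt, hmul.mul_basisElt, cosetProdClass_comm]
  exact LinearMap.congr_fun₂ hflip x y

theorem IsXBMul.assoc (hmul : IsXBMul mul) (x y z : XB k G) :
    mul (mul x y) z = mul x (mul y z) := by
  have hbasis : ∀ (K H L : Subgroup G) (b a c : G) (hb : b ∈ Subgroup.centralizer (K : Set G))
      (ha : a ∈ Subgroup.centralizer (H : Set G)) (hc : c ∈ Subgroup.centralizer (L : Set G)),
      mul (mul (basisElt k K b hb) (basisElt k H a ha)) (basisElt k L c hc) =
        mul (basisElt k K b hb) (mul (basisElt k H a ha) (basisElt k L c hc)) := by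
    intro K H L b a c hb ha hc
    rw [hmul.mul_basisElt, cosetProdClass, hmul.mul_crossedSetClass, hmul.comm (basisElt k K b hb),
      hmul.mul_basisElt, cosetProdClass, hmul.mul_crossedSetClass]
    have hK := isCrossing_cosetCrossing K b hb
    have hH := isCrossing_cosetCrossing H a ha
    have hL := isCrossing_cosetCrossing L c hc
    exact (crossedSetClass_prod_assoc hK hH hL).trans (crossedSetClass_prod_comm hK (hH.prod hL))
  -- extend from basis elements one variable at a time, starting with `z`
  have hz : ∀ K H b a hb ha, mul (mul (basisElt k K b hb) (basisElt k H a ha)) =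
      mul (basisElt k K b hb) ∘ₗ mul (basisElt k H a ha) := fun K H b a hb ha =>
    XB.hom_ext (hbasis K H · b a · hb ha ·)
  have hy : ∀ K b hb, mul.flip z ∘ₗ mul (basisElt k K b hb) =
      mul (basisElt k K b hb) ∘ₗ mul.flip z := fun K b hb =>
    XB.hom_ext fun H a ha => LinearMap.congr_fun (hz K H b a hb ha) z
  have hx : mul.flip z ∘ₗ mul.flip y = mul.flip (mul y z) :=
    XB.hom_ext fun K b hb => LinearMap.congr_fun (hy K b hb) y
  exact LinearMap.congr_fun hx x

theorem IsXBMul.one_mul (hmul : IsXBMul mul) (x : XB k G) :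
    mul (basisElt k ⊤ 1 one_mem_centralizer_top) x = x := by
  have hone : mul (basisElt k ⊤ 1 one_mem_centralizer_top) = LinearMap.id :=
    XB.hom_ext fun H a ha => by rw [hmul.mul_basisElt, cosetProdClass_top_one, LinearMap.id_apply]
  rw [hone, LinearMap.id_apply]

end Laws

/-- Well-definedness is expressed by the existence of a `k`-bilinear multiplication satisfying
the formula for every choice of pair representatives and of double coset representatives. -/
theorem statement7 (k G : Type) [CommRing k] [Group G] [Fintype G] :
    (∃ mul : XB k G →ₗ[k] XB k G →ₗ[k] XB k G, IsXBMul mul) ∧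
    ∀ mul : XB k G →ₗ[k] XB k G →ₗ[k] XB k G, IsXBMul mul →
      (∀ x y z : XB k G, mul (mul x y) z = mul x (mul y z)) ∧
      (∀ x y : XB k G, mul x y = mul y x) ∧
      (∀ x : XB k G,
        mul (basisElt k ⊤ 1 one_mem_centralizer_top) x = x ∧
        mul x (basisElt k ⊤ 1 one_mem_centralizer_top) = x) :=
  ⟨⟨xbMul k, isXBMul_xbMul k⟩, fun _ hmul => ⟨hmul.assoc, hmul.comm, fun x =>
    ⟨hmul.one_mul x, (hmul.comm _ _).trans (hmul.one_mul x)⟩⟩⟩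

end CrossedBurnside
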